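/- For all integers 1 ≤ p, q ≤ N, if ũ ∈ ℝ^p satisfies S(q,p) ũ = λ ũ for some λ ∈ ℝ, then the vector u ∈ ℂ^p with entries u_j = exp(-iπ(j-1)(q-1)/N) ũ_j for 1 ≤ j ≤ p satisfies A A* u = λ u. Hence, after normalization, u is a left singular vector of A with singular value √λ. -/

import Mathlib

open Matrix Complex

/-- The twiddle factor `ω = exp(2πi/N)`. -/
noncomputable def omegaN (N : ℕ) : ℂ := Complex.exp (2 * Real.pi * Complex.I / N)

/-- The `p × q` Fourier submatrix `A` with entries `A_{j,k} = ω^{-(j-1)(k-1)}`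
(indices here are 0-based). -/
noncomputable def fourierA (N p q : ℕ) : Matrix (Fin p) (Fin q) ℂ :=
  fun j k => omegaN N ^ (-(((j : ℕ) * (k : ℕ) : ℕ) : ℤ))

/-- The periodic prolate matrix `S(a,b) ∈ ℝ^{b×b}` with entries
`sin(aπ(j-k)/N)/sin(π(j-k)/N)` off the diagonal and `a` on the diagonal.
In particular `prolateS N q p : Matrix (Fin p) (Fin p) ℝ` is `S(q,p)`. -/
noncomputable def prolateS (N a b : ℕ) : Matrix (Fin b) (Fin b) ℝ :=
  fun j k => if j = k then (a : ℝ)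
    else Real.sin ((a : ℝ) * Real.pi * (((j : ℕ) : ℝ) - ((k : ℕ) : ℝ)) / N) /
         Real.sin (Real.pi * (((j : ℕ) : ℝ) - ((k : ℕ) : ℝ)) / N)

/-!
The entries of `A A*` are geometric sums of powers of `ω^(k-j)`, i.e. Dirichlet kernels:
`(A A*)_{jk} = e^{iπ(k-j)(q-1)/N} · sin(qπ(k-j)/N) / sin(π(k-j)/N)`. Hence `A A* = D S(q,p) D*`
with `D` the unitary diagonal matrix of phases `e^{-iπj(q-1)/N}`, and `u = D ũ` is sent to
`D S(q,p) ũ = λ u`.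
-/

open scoped Real

namespace Complex

theorem exp_two_mul_mul_I_sub_one (z : ℂ) : exp (2 * z * I) - 1 = 2 * I * exp (z * I) * sin z := by
  rw [sin, show 2 * z * I = z * I + z * I by ring, show -z * I = -(z * I) by ring, exp_add, exp_neg]
  field_simp
  linear_combination (exp (z * I) ^ 2 - 1) * I_sq

theorem geom_sum_exp_two_mul_mul_I {z : ℂ} (hz : sin z ≠ 0) (n : ℕ) :
    ∑ m ∈ Finset.range n, exp (2 * z * I) ^ m = exp ((n - 1) * z * I) * (sin (n * z) / sin z) := by
  have hne : exp (2 * z * I) ≠ 1 := by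
    rw [← sub_ne_zero, exp_two_mul_mul_I_sub_one]
    exact mul_ne_zero (mul_ne_zero (mul_ne_zero two_ne_zero I_ne_zero) (exp_ne_zero _)) hz
  have hpow : exp (2 * z * I) ^ n = exp (2 * (n * z) * I) := by
    rw [← exp_nat_mul]; ring_nf
  have hphase : exp ((n - 1) * z * I) * exp (z * I) = exp (n * z * I) := by
    rw [← exp_add]; ring_nf
  rw [geom_sum_eq hne, hpow, exp_two_mul_mul_I_sub_one, exp_two_mul_mul_I_sub_one, ← hphase]
  field_simp

end Complex

theorem Real.sin_pi_mul_sub_div_ne_zero {N x y : ℕ} (hx : x < N) (hy : y < N) (hxy : x ≠ y) :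
    Real.sin (π * (x - y) / N) ≠ 0 := by
  have hN : (0 : ℝ) < N := by exact_mod_cast (Nat.zero_le x).trans_lt hx
  have hxN : (x : ℝ) < N := by exact_mod_cast hx
  have hyN : (y : ℝ) < N := by exact_mod_cast hy
  have hxy' : (x : ℝ) - y ≠ 0 := sub_ne_zero.2 (Nat.cast_injective.ne hxy)
  rw [Ne, Real.sin_eq_zero_iff_of_lt_of_lt]
  · exact div_ne_zero (mul_ne_zero Real.pi_ne_zero hxy') hN.ne'
  · rw [lt_div_iff₀ hN]; nlinarith [Real.pi_pos, (x.cast_nonneg : (0:ℝ) ≤ x)]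
  · rw [div_lt_iff₀ hN]; nlinarith [Real.pi_pos, (y.cast_nonneg : (0:ℝ) ≤ y)]

noncomputable def prolatePhase (N p q : ℕ) : Fin p → ℂ :=
  fun j => exp (-(π : ℂ) * I * (j : ℕ) * ((q : ℂ) - 1) / N)

theorem prolatePhase_mul_star (N p q : ℕ) (j k : Fin p) :
    prolatePhase N p q j * star (prolatePhase N p q k) =
      exp ((q - 1) * (π * (((k : ℕ) : ℂ) - (j : ℕ)) / N) * I) := by
  rw [prolatePhase, prolatePhase, RCLike.star_def, ← exp_conj, ← exp_add]
  congr 1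
  simp only [map_neg, map_div₀, map_mul, map_sub, map_one, conj_ofReal, conj_I, map_natCast]
  ring

theorem fourierA_mul_conjTranspose_apply (N p q : ℕ) (j k : Fin p) :
    (fourierA N p q * (fourierA N p q)ᴴ) j k =
      ∑ m ∈ Finset.range q, exp (2 * (π * (((k : ℕ) : ℂ) - (j : ℕ)) / N) * I) ^ m := by
  have hA : ∀ (a : Fin p) (b : Fin q),
      fourierA N p q a b = exp (-(2 * π * I * (a : ℕ) * (b : ℕ) / N)) := by
    intro a b
    rw [fourierA, omegaN, ← exp_int_mul]
    push_cast
    ring_nf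
  rw [mul_apply, ← Fin.sum_univ_eq_sum_range]
  refine Finset.sum_congr rfl fun m _ => ?_
  rw [conjTranspose_apply, hA, hA, RCLike.star_def, ← exp_conj, ← exp_add, ← exp_nat_mul]
  congr 1
  simp only [map_neg, map_div₀, map_mul, conj_ofReal, conj_I, map_natCast, map_ofNat]
  ring

theorem fourierA_mul_conjTranspose (N p q : ℕ) (hpN : p ≤ N) :
    fourierA N p q * (fourierA N p q)ᴴ =
      diagonal (prolatePhase N p q) * (prolateS N q p).map ofReal *
        (diagonal (prolatePhase N p q))ᴴ := by
  ext j k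
  rw [fourierA_mul_conjTranspose_apply, diagonal_conjTranspose, mul_diagonal, diagonal_mul,
    map_apply, Pi.star_apply, prolateS]
  by_cases hjk : j = k
  · subst hjk
    rw [if_pos rfl, mul_right_comm (prolatePhase N p q j), prolatePhase_mul_star]
    simp
  · set θ : ℝ := π * ((k : ℕ) - (j : ℕ)) / N
    have hθ : Real.sin θ ≠ 0 := Real.sin_pi_mul_sub_div_ne_zero (k.2.trans_le hpN)
      (j.2.trans_le hpN) (Fin.val_ne_of_ne (Ne.symm hjk))
    have hsum := geom_sum_exp_two_mul_mul_I (z := θ) (by exact_mod_cast hθ) q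
    push_cast [θ] at hsum
    rw [hsum, if_neg hjk, mul_right_comm (prolatePhase N p q j), prolatePhase_mul_star]
    congr 1
    push_cast
    rw [← neg_div_neg_eq, ← sin_neg, ← sin_neg]
    congr 2 <;> ring

theorem Matrix.mul_mul_conjTranspose_mulVec_mulVec {n R : Type*} [Fintype n] [DecidableEq n]
    [Semiring R] [StarRing R] {U : Matrix n n R} (hU : Uᴴ * U = 1) (S : Matrix n n R) (v : n → R) :
    (U * S * Uᴴ) *ᵥ (U *ᵥ v) = U *ᵥ (S *ᵥ v) := by
  rw [mulVec_mulVec, Matrix.mul_assoc, Matrix.mul_assoc, hU, Matrix.mul_one, mulVec_mulVec]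

theorem conjTranspose_diagonal_prolatePhase_mul (N p q : ℕ) :
    (diagonal (prolatePhase N p q))ᴴ * diagonal (prolatePhase N p q) = 1 := by
  rw [diagonal_conjTranspose, diagonal_mul_diagonal, ← diagonal_one]
  congr 1
  funext j
  rw [Pi.star_apply, mul_comm, prolatePhase_mul_star]
  simp

theorem left_singular_vector_of_prolate_eigenvector_general
    (N p q : ℕ) (hpN : p ≤ N)
    (ut : Fin p → ℝ) (lam : ℝ)
    (hSu : (prolateS N q p).mulVec ut = lam • ut) :
    (fourierA N p q * (fourierA N p q)ᴴ).mulVec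
        (fun j : Fin p => Complex.exp (-(Real.pi : ℂ) * Complex.I * ((j : ℕ) : ℂ) *
          ((q : ℂ) - 1) / (N : ℂ)) * (ut j : ℂ)) =
      (lam : ℂ) • (fun j : Fin p => Complex.exp (-(Real.pi : ℂ) * Complex.I * ((j : ℕ) : ℂ) *
          ((q : ℂ) - 1) / (N : ℂ)) * (ut j : ℂ)) := by
  have hu : (fun j : Fin p => Complex.exp (-(Real.pi : ℂ) * Complex.I * ((j : ℕ) : ℂ) *
      ((q : ℂ) - 1) / (N : ℂ)) * (ut j : ℂ)) = diagonal (prolatePhase N p q) *ᵥ (ofReal ∘ ut) :=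
    funext fun j => (mulVec_diagonal (prolatePhase N p q) (ofReal ∘ ut) j).symm
  have hSu_complex : (prolateS N q p).map ofReal *ᵥ (ofReal ∘ ut) = (lam : ℂ) • (ofReal ∘ ut) := by
    funext j
    simpa [mulVec, dotProduct] using congrArg ofReal (congrFun hSu j)
  rw [hu, fourierA_mul_conjTranspose N p q hpN,
    mul_mul_conjTranspose_mulVec_mulVec (conjTranspose_diagonal_prolatePhase_mul N p q),
    hSu_complex, mulVec_smul]

/-- If `S(q,p) ũ = λ ũ` then the vector `u` with `u_j = exp(-iπ(j-1)(q-1)/N) ũ_j`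
satisfies `A A* u = λ u`: it is (after normalization) a left singular vector of `A`
with singular value `√λ`. -/
theorem left_singular_vector_of_prolate_eigenvector
    (N p q : ℕ) (hN : 0 < N) (hp1 : 1 ≤ p) (hpN : p ≤ N) (hq1 : 1 ≤ q) (hqN : q ≤ N)
    (ut : Fin p → ℝ) (lam : ℝ)
    (hSu : (prolateS N q p).mulVec ut = lam • ut) :
    (fourierA N p q * (fourierA N p q)ᴴ).mulVec
        (fun j : Fin p => Complex.exp (-(Real.pi : ℂ) * Complex.I * ((j : ℕ) : ℂ) *
          ((q : ℂ) - 1) / (N : ℂ)) * (ut j : ℂ)) =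
      (lam : ℂ) • (fun j : Fin p => Complex.exp (-(Real.pi : ℂ) * Complex.I * ((j : ℕ) : ℂ) *
          ((q : ℂ) - 1) / (N : ℂ)) * (ut j : ℂ)) :=
  left_singular_vector_of_prolate_eigenvector_general N p q hpN ut lam hSu
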